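/- Let π be a permutation of dyadic intervals with [[π(B)]] ≤ M[[B]] for all B ⊆ D. Fix D(I) ⊆ D with (D(I))* ⊆ I and K > 0, and let S(I) = { J ∈ D(I) : |π(J)| / |(π(D(I)))*| ≥ K|J|/|I| }. Then Σ_{J ∈ max S(I)} |J|/|I| ≤ M/K. -/

import Mathlib

open MeasureTheory ENNReal

/-- A dyadic subinterval of `[0,1]`: `[k/2^n, (k+1)/2^n)`. -/
structure DyadicI where
  n : ℕ
  k : ℕ
  hk : k < 2 ^ n

namespace DyadicI

/-- The underlying set of a dyadic interval. -/
noncomputable def toSet (I : DyadicI) : Set ℝ :=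
  Set.Ico ((I.k : ℝ) / 2 ^ I.n) ((I.k + 1 : ℝ) / 2 ^ I.n)

/-- The length `|I| = 2^{-n}`. -/
noncomputable def len (I : DyadicI) : ℝ≥0∞ := (2 ^ I.n : ℝ≥0∞)⁻¹

/-- Containment of dyadic intervals. -/
def le (J I : DyadicI) : Prop := J.toSet ⊆ I.toSet

/-- The measure of the pointset covered by a collection of dyadic intervals. -/
noncomputable def star (B : Set DyadicI) : ℝ≥0∞ :=
  volume (⋃ I ∈ B, I.toSet)

/-- The Carleson constant of a collection of dyadic intervals. -/
noncomputable def carleson (B : Set DyadicI) : ℝ≥0∞ :=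
  ⨆ I : DyadicI, (len I)⁻¹ * ∑' J : {J : DyadicI // J ∈ B ∧ le J I}, len (J : DyadicI)

/-- Maximal intervals of a collection. -/
def maxB (B : Set DyadicI) : Set DyadicI :=
  {I | I ∈ B ∧ ∀ J ∈ B, le I J → J = I}

/-- Squared dyadic BMO norm of a coefficient family, sup over collections. -/
noncomputable def bmoSq (x : DyadicI → ℝ) : ℝ≥0∞ :=
  ⨆ B : Set DyadicI,
    (star B)⁻¹ * ∑' I : B, ENNReal.ofReal (x I ^ 2) * len (I : DyadicI)

/-- Squared dyadic BMO norm of a coefficient family, sup over dyadic intervals. -/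
noncomputable def bmoSq' (x : DyadicI → ℝ) : ℝ≥0∞ :=
  ⨆ I : DyadicI,
    (len I)⁻¹ * ∑' J : {J : DyadicI // le J I}, ENNReal.ofReal (x J ^ 2) * len (J : DyadicI)

lemma toSet_nonempty (I : DyadicI) : I.toSet.Nonempty := by
  refine Set.nonempty_Ico.2 ?_
  have : (0:ℝ) < 2 ^ I.n := by positivity
  rw [div_lt_div_iff₀ this this]
  nlinarith

lemma measurableSet_toSet (I : DyadicI) : MeasurableSet I.toSet :=
  measurableSet_Ico

lemma volume_toSet (I : DyadicI) : volume I.toSet = I.len := by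
  rw [toSet, Real.volume_Ico, len]
  have h : (0:ℝ) < 2 ^ I.n := by positivity
  have : (I.k + 1 : ℝ) / 2 ^ I.n - (I.k : ℝ) / 2 ^ I.n = ((2:ℝ) ^ I.n)⁻¹ := by
    field_simp
    ring
  rw [this, ENNReal.ofReal_inv_of_pos h]
  simp [ENNReal.ofReal_pow]

lemma len_ne_zero (I : DyadicI) : I.len ≠ 0 := by
  simp only [len, ne_eq, ENNReal.inv_eq_zero]
  exact ENNReal.pow_ne_top (by norm_num)

lemma len_ne_top (I : DyadicI) : I.len ≠ ⊤ := by
  simp [len]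

lemma le_refl (I : DyadicI) : le I I := Set.Subset.rfl

lemma le_trans {a b c : DyadicI} (h1 : le a b) (h2 : le b c) : le a c :=
  h1.trans h2

lemma n_le_of_le {J I : DyadicI} (h : le J I) : I.n ≤ J.n := by
  have hv := measure_mono (μ := volume) h
  rw [volume_toSet, volume_toSet] at hv
  rw [len, len] at hv
  have h2 : (2:ℝ≥0∞) ^ I.n ≤ 2 ^ J.n := (ENNReal.inv_le_inv).1 hv
  have h3 : ((2^I.n:ℕ):ℝ≥0∞) ≤ ((2^J.n:ℕ):ℝ≥0∞) := by push_cast; exact h2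
  exact (Nat.pow_le_pow_iff_right (by norm_num)).1 (Nat.cast_le.1 h3)

lemma eq_of_le_of_n_le {J I : DyadicI} (h : le J I) (hn : J.n ≤ I.n) : J = I := by
  have hn' : I.n = J.n := Nat.le_antisymm (n_le_of_le h) hn
  have hpos : (0:ℝ) < 2 ^ J.n := by positivity
  have hlt : (J.k : ℝ) / 2 ^ J.n < (J.k + 1 : ℝ) / 2 ^ J.n := by
    rw [div_lt_div_iff₀ hpos hpos]; nlinarith
  have hsub := h
  rw [le, toSet, toSet, hn'] at hsub
  rw [Set.Ico_subset_Ico_iff hlt] at hsub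
  obtain ⟨h1, h2⟩ := hsub
  have hk1 : (I.k : ℝ) ≤ J.k := by
    have := (div_le_div_iff_of_pos_right hpos).1 h1; linarith
  have hk2 : (J.k : ℝ) ≤ I.k := by
    have := (div_le_div_iff_of_pos_right hpos).1 h2; linarith
  have : J.k = I.k := by exact_mod_cast _root_.le_antisymm hk2 hk1
  obtain ⟨n1, k1, hh1⟩ := J
  obtain ⟨n2, k2, hh2⟩ := I
  simp_all

lemma le_antisymm' {J I : DyadicI} (h1 : le J I) (h2 : le I J) : J = I :=
  eq_of_le_of_n_le h1 (n_le_of_le h2)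

/-- nestedness helper -/
lemma subset_or_disjoint_of_n_le {J J' : DyadicI} (h : J.n ≤ J'.n) :
    J'.toSet ⊆ J.toSet ∨ Disjoint J.toSet J'.toSet := by
  set d := J'.n - J.n with hd
  have hnd : J'.n = J.n + d := by omega
  have hpos : (0:ℝ) < 2 ^ J.n := by positivity
  have hpos' : (0:ℝ) < 2 ^ J'.n := by positivity
  have hdpos : (0:ℝ) < 2 ^ d := by positivity
  have hpow : (2:ℝ) ^ J'.n = 2 ^ J.n * 2 ^ d := by rw [hnd, pow_add]
  by_cases hb : J'.k < J.k * 2^d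
  · -- J' entirely to the left of J
    right
    have hnatR : (J'.k:ℝ) + 1 ≤ (J.k:ℝ) * 2^d := by exact_mod_cast hb
    have h1 : (J'.k + 1 : ℝ) / 2 ^ J'.n ≤ (J.k : ℝ) / 2 ^ J.n := by
      rw [div_le_div_iff₀ hpos' hpos, hpow]
      nlinarith [mul_le_mul_of_nonneg_right hnatR hpos.le]
    rw [Set.disjoint_left]
    rintro x ⟨hx1, _⟩ ⟨_, hx4⟩
    exact absurd (hx4.trans_le (h1.trans hx1)) (lt_irrefl x)
  · push_neg at hb
    have hbR : (J.k:ℝ) * 2^d ≤ (J'.k:ℝ) := by exact_mod_cast hb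
    by_cases hc : (J.k+1) * 2^d ≤ J'.k
    · -- J' entirely to the right of J
      right
      have hcR : ((J.k:ℝ)+1) * 2^d ≤ (J'.k:ℝ) := by exact_mod_cast hc
      have h1 : (J.k + 1 : ℝ) / 2 ^ J.n ≤ (J'.k : ℝ) / 2 ^ J'.n := by
        rw [div_le_div_iff₀ hpos hpos', hpow]
        nlinarith [mul_le_mul_of_nonneg_right hcR hpos.le]
      rw [Set.disjoint_left]
      rintro x ⟨_, hx2⟩ ⟨hx3, _⟩
      exact absurd ((hx2.trans_le h1).trans_le hx3) (lt_irrefl x)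
    · -- J' ⊆ J
      left
      push_neg at hc
      have hcR : (J'.k:ℝ) + 1 ≤ ((J.k:ℝ)+1) * 2^d := by exact_mod_cast hc
      have h1 : (J.k : ℝ) / 2 ^ J.n ≤ (J'.k : ℝ) / 2 ^ J'.n := by
        rw [div_le_div_iff₀ hpos hpos', hpow]
        nlinarith [mul_le_mul_of_nonneg_right hbR hpos.le]
      have h2 : (J'.k + 1 : ℝ) / 2 ^ J'.n ≤ (J.k + 1 : ℝ) / 2 ^ J.n := by
        rw [div_le_div_iff₀ hpos' hpos, hpow]
        nlinarith [mul_le_mul_of_nonneg_right hcR hpos.le]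
      intro x hx
      exact ⟨h1.trans hx.1, hx.2.trans_le h2⟩

lemma nested {J J' : DyadicI} (h : (J.toSet ∩ J'.toSet).Nonempty) :
    le J J' ∨ le J' J := by
  rcases Nat.le_total J.n J'.n with hn | hn
  · rcases subset_or_disjoint_of_n_le hn with hs | hdis
    · exact Or.inr hs
    · exact absurd h (by rw [Set.not_nonempty_iff_eq_empty]; exact hdis.inter_eq)
  · rcases subset_or_disjoint_of_n_le hn with hs | hdis
    · exact Or.inl hs
    · refine absurd h ?_
      rw [Set.not_nonempty_iff_eq_empty, Set.inter_comm]
      exact hdis.inter_eq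


instance : Countable DyadicI := by
  have h : Function.Injective (fun I : DyadicI => (I.n, I.k)) := by
    rintro ⟨n1, k1, h1⟩ ⟨n2, k2, h2⟩ h
    simp_all
  exact h.countable

lemma toSet_subset_unit (I : DyadicI) : I.toSet ⊆ Set.Ico (0:ℝ) 1 := by
  intro x hx
  have hpos : (0:ℝ) < 2 ^ I.n := by positivity
  have hk : (I.k : ℝ) + 1 ≤ 2 ^ I.n := by exact_mod_cast I.hk
  constructor
  · refine _root_.le_trans ?_ hx.1
    positivity
  · refine lt_of_lt_of_le hx.2 ?_
    rw [div_le_one hpos]; exact hk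

lemma star_le_one (B : Set DyadicI) : star B ≤ 1 := by
  have h : (⋃ I ∈ B, I.toSet) ⊆ Set.Ico (0:ℝ) 1 := by
    refine Set.iUnion₂_subset fun I _ => toSet_subset_unit I
  calc star B ≤ volume (Set.Ico (0:ℝ) 1) := measure_mono h
    _ = 1 := by simp

lemma star_ne_top (B : Set DyadicI) : star B ≠ ⊤ :=
  fun h => by simpa [h] using star_le_one B

lemma star_mono {A B : Set DyadicI} (h : A ⊆ B) : star A ≤ star B :=
  measure_mono (Set.biUnion_subset_biUnion_left h)

lemma len_le_star {B : Set DyadicI} {J : DyadicI} (hJ : J ∈ B) : J.len ≤ star B := by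
  rw [← volume_toSet]
  exact measure_mono (Set.subset_biUnion_of_mem hJ)

lemma maxB_pairwise_disjoint (B : Set DyadicI) :
    (maxB B).Pairwise fun a b => Disjoint a.toSet b.toSet := by
  intro a ha b hb hne
  by_contra hdis
  rcases Set.not_disjoint_iff_nonempty_inter.1 hdis with hx
  rcases nested hx with hab | hba
  · exact hne (ha.2 b hb.1 hab).symm
  · exact hne (hb.2 a ha.1 hba)

lemma tsum_len_le_star {B : Set DyadicI}
    (hdisj : B.Pairwise fun a b => Disjoint a.toSet b.toSet) :
    ∑' J : B, len (J : DyadicI) ≤ star B := by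
  have hp : Pairwise (Function.onFun Disjoint fun J : B => (J : DyadicI).toSet) := by
    rintro ⟨a, ha⟩ ⟨b, hb⟩ hne
    exact hdisj ha hb (fun h => hne (Subtype.ext h))
  have hm : ∀ J : B, MeasurableSet (J : DyadicI).toSet := fun J => measurableSet_toSet _
  have e : ∑' J : B, len (J : DyadicI) = volume (⋃ J : B, (J : DyadicI).toSet) := by
    rw [measure_iUnion hp hm]
    exact tsum_congr fun J => (volume_toSet _).symm
  rw [e, star]
  apply measure_mono
  simp
    
lemma carleson_le_one_of_disjoint {B : Set DyadicI}
    (hdisj : B.Pairwise fun a b => Disjoint a.toSet b.toSet) :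
    carleson B ≤ 1 := by
  rw [carleson]
  refine iSup_le fun I => ?_
  set B' : Set DyadicI := {J | J ∈ B ∧ le J I} with hB'
  have hsub : B' ⊆ B := fun J hJ => hJ.1
  have hd' : B'.Pairwise fun a b => Disjoint a.toSet b.toSet := hdisj.mono hsub
  have h1 : ∑' J : B', len (J : DyadicI) ≤ star B' := tsum_len_le_star hd'
  have h2 : star B' ≤ len I := by
    rw [← volume_toSet]
    exact measure_mono (Set.iUnion₂_subset fun J hJ => hJ.2)
  calc (len I)⁻¹ * ∑' J : {J : DyadicI // J ∈ B ∧ le J I}, len (J : DyadicI)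
      ≤ (len I)⁻¹ * len I := by
        exact mul_le_mul_right (h1.trans h2) _
    _ = 1 := ENNReal.inv_mul_cancel (len_ne_zero I) (len_ne_top I)

lemma exists_maximal {B : Set DyadicI} {J : DyadicI} (hJ : J ∈ B) :
    ∃ L, L ∈ maxB B ∧ le J L := by
  set T : Set DyadicI := {L | L ∈ B ∧ le J L} with hT
  have hTfin : T.Finite := by
    apply Set.Finite.of_finite_image (f := DyadicI.n)
    · apply Set.Finite.subset (Set.finite_Iic J.n)
      rintro _ ⟨L, hL, rfl⟩
      exact n_le_of_le hL.2
    · rintro a ⟨_, ha⟩ b ⟨_, hb⟩ hn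
      rcases nested ⟨(J.toSet_nonempty).choose,
        ha (J.toSet_nonempty).choose_spec, hb (J.toSet_nonempty).choose_spec⟩ with h | h
      · exact eq_of_le_of_n_le h (le_of_eq hn)
      · exact (eq_of_le_of_n_le h (le_of_eq hn.symm)).symm
  have hTne : T.Nonempty := ⟨J, hJ, le_refl J⟩
  obtain ⟨L, hLT, hmin⟩ := Set.Finite.exists_minimalFor DyadicI.n T hTfin hTne
  refine ⟨L, ⟨hLT.1, ?_⟩, hLT.2⟩
  intro L' hL' hle
  have hT' : L' ∈ T := ⟨hL', le_trans hLT.2 hle⟩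
  exact (eq_of_le_of_n_le hle (hmin (j := L') hT' (n_le_of_le hle))).symm


lemma tsum_le_carleson_mul_star (B : Set DyadicI) :
    ∑' J : B, len (J : DyadicI) ≤ carleson B * star B := by
  classical
  let m : B → maxB B := fun J => ⟨(exists_maximal J.2).choose, (exists_maximal J.2).choose_spec.1⟩
  have hm : ∀ J : B, le (J : DyadicI) ((m J : DyadicI)) := fun J => (exists_maximal J.2).choose_spec.2
  rw [← tsum_fiberwise (fun J : B => len (J : DyadicI)) m]
  have hstep : ∀ L : maxB B,
      (∑' J : (m ⁻¹' {L}), len ((J : B) : DyadicI)) ≤ carleson B * len (L : DyadicI) := by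
    intro L
    have h1 : (∑' J : (m ⁻¹' {L}), len ((J : B) : DyadicI))
        ≤ ∑' J : {J : DyadicI // J ∈ B ∧ le J (L : DyadicI)}, len (J : DyadicI) := by
      refine Summable.tsum_le_tsum_of_inj
        (fun J => ⟨((J : B) : DyadicI), (J : B).2, ?_⟩)
        ?_ (fun _ _ => zero_le) (fun _ => le_rfl) ENNReal.summable ENNReal.summable
      · have hJ := hm (J : B)
        have hJL : m (J : B) = L := J.2
        rw [hJL] at hJ
        exact hJ
      · rintro ⟨⟨a, ha⟩, ha2⟩ ⟨⟨b, hb⟩, hb2⟩ hab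
        simp only [Subtype.mk.injEq] at hab ⊢
        exact hab
    have h2 : (∑' J : {J : DyadicI // J ∈ B ∧ le J (L : DyadicI)}, len (J : DyadicI))
        ≤ carleson B * len (L : DyadicI) := by
      have hc : (len (L : DyadicI))⁻¹ *
          ∑' J : {J : DyadicI // J ∈ B ∧ le J (L : DyadicI)}, len (J : DyadicI) ≤ carleson B :=
        le_iSup (fun I : DyadicI => (len I)⁻¹ *
          ∑' J : {J : DyadicI // J ∈ B ∧ le J I}, len (J : DyadicI)) (L : DyadicI)
      calc (∑' J : {J : DyadicI // J ∈ B ∧ le J (L : DyadicI)}, len (J : DyadicI))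
          = len (L : DyadicI) * ((len (L : DyadicI))⁻¹ *
            ∑' J : {J : DyadicI // J ∈ B ∧ le J (L : DyadicI)}, len (J : DyadicI)) := by
            rw [← mul_assoc, ENNReal.mul_inv_cancel (len_ne_zero _) (len_ne_top _), one_mul]
        _ ≤ len (L : DyadicI) * carleson B := mul_le_mul_right hc _
        _ = carleson B * len (L : DyadicI) := mul_comm _ _
    exact h1.trans h2
  calc (∑' (L : maxB B) (J : (m ⁻¹' {L})), len ((J : B) : DyadicI))
      ≤ ∑' L : maxB B, carleson B * len (L : DyadicI) :=
        Summable.tsum_le_tsum hstep ENNReal.summable ENNReal.summable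
    _ = carleson B * ∑' L : maxB B, len (L : DyadicI) := ENNReal.tsum_mul_left
    _ ≤ carleson B * star (maxB B) :=
        mul_le_mul_right (tsum_len_le_star (maxB_pairwise_disjoint B)) _
    _ ≤ carleson B * star B := mul_le_mul_right (star_mono fun x hx => hx.1) _



end DyadicI

open DyadicI

/-- the maximal intervals of the "stopped" collection `S(I)` cover only
a `M/K`-fraction of `I`. -/
theorem stopped_part_estimate (π : Equiv.Perm DyadicI) (M : ℝ≥0∞)
    (hπ : ∀ B : Set DyadicI, carleson (π '' B) ≤ M * carleson B)
    (I : DyadicI) (DI : Set DyadicI) (hDI : ∀ J ∈ DI, le J I)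
    (K : ℝ≥0∞) (hK : 0 < K)
    (S : Set DyadicI)
    (hS : S = {J ∈ DI | K * (len J / len I) ≤ len (π J) / star (π '' DI)}) :
    (len I)⁻¹ * ∑' J : maxB S, len (J : DyadicI) ≤ M / K := by
  have hmemS : ∀ J ∈ S, J ∈ DI ∧ K * (len J / len I) ≤ len (π J) / star (π '' DI) := by
    intro J hJ; rw [hS] at hJ; exact hJ
  by_cases h0 : maxB S = ∅
  · haveI := Set.isEmpty_coe_sort.2 h0
    rw [tsum_empty]
    simp
  · obtain ⟨J₀, hJ₀⟩ := Set.nonempty_iff_ne_empty.2 h0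
    set A := star (π '' DI) with hA
    have hJ₀S : J₀ ∈ S := hJ₀.1
    have hJ₀DI : J₀ ∈ DI := (hmemS _ hJ₀S).1
    have hA0 : A ≠ 0 := by
      have hle : len (π J₀) ≤ A := len_le_star (Set.mem_image_of_mem π hJ₀DI)
      intro h; rw [h] at hle
      exact len_ne_zero _ (le_zero_iff.1 hle)
    have hAtop : A ≠ ⊤ := star_ne_top _
    have hK0 : K ≠ 0 := hK.ne'
    have hKtop : K ≠ ⊤ := by
      have h := (hmemS _ hJ₀S).2
      intro htop
      rw [htop] at h
      have hne : len J₀ / len I ≠ 0 := by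
        simp [ENNReal.div_eq_zero_iff, len_ne_zero, len_ne_top]
      rw [ENNReal.top_mul hne] at h
      exact (ENNReal.div_lt_top (len_ne_top _) hA0).ne (top_le_iff.1 h)
    set Sig := ∑' J : maxB S, len (J : DyadicI) with hSig
    have hpt : ∀ J : maxB S, K / len I * len (J : DyadicI) ≤ len (π (J : DyadicI)) / A := by
      intro J
      have h := (hmemS _ J.2.1).2
      calc K / len I * len (J : DyadicI) = K * (len (J : DyadicI) / len I) := by
            rw [div_eq_mul_inv, div_eq_mul_inv]; ring
        _ ≤ _ := h
    have hsum1 : K / len I * Sig ≤ (∑' J : maxB S, len (π (J : DyadicI))) / A := by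
      rw [hSig, ← ENNReal.tsum_mul_left]
      calc (∑' J : maxB S, K / len I * len (J : DyadicI))
          ≤ ∑' J : maxB S, len (π (J : DyadicI)) / A :=
            Summable.tsum_le_tsum hpt ENNReal.summable ENNReal.summable
        _ = (∑' J : maxB S, len (π (J : DyadicI))) / A := by
            simp only [div_eq_mul_inv, ENNReal.tsum_mul_right]
    have himg : (∑' J : maxB S, len (π (J : DyadicI)))
        = ∑' J' : (π '' maxB S : Set DyadicI), len (J' : DyadicI) := by
      rw [← Equiv.tsum_eq (Equiv.Set.image π (maxB S) π.injective)
        (fun J' => len (J' : DyadicI))]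
      exact tsum_congr fun J => by simp [Equiv.Set.image, Equiv.Set.imageOfInjOn]
    have hmax_sub : maxB S ⊆ DI := fun x hx => (hmemS _ hx.1).1
    have hbound : (∑' J' : (π '' maxB S : Set DyadicI), len (J' : DyadicI)) ≤ M * A := by
      calc (∑' J' : (π '' maxB S : Set DyadicI), len (J' : DyadicI))
          ≤ carleson (π '' maxB S) * star (π '' maxB S) := tsum_le_carleson_mul_star _
        _ ≤ (M * carleson (maxB S)) * star (π '' maxB S) := by
            exact mul_le_mul_left (hπ _) _
        _ ≤ (M * 1) * A := by
            refine mul_le_mul ?_ ?_ zero_le zero_le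
            · exact mul_le_mul_right (carleson_le_one_of_disjoint (maxB_pairwise_disjoint _)) _
            · exact star_mono (Set.image_mono hmax_sub)
        _ = M * A := by rw [mul_one]
    have hfinal : K / len I * Sig ≤ M := by
      calc K / len I * Sig ≤ (∑' J : maxB S, len (π (J : DyadicI))) / A := hsum1
        _ = (∑' J' : (π '' maxB S : Set DyadicI), len (J' : DyadicI)) / A := by rw [himg]
        _ ≤ (M * A) / A := ENNReal.div_le_div_right hbound A
        _ = M := by
            rw [mul_div_assoc, ENNReal.div_self hA0 hAtop, mul_one]
    have e : (len I)⁻¹ * Sig = (K / len I * Sig) / K := by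
      rw [div_eq_mul_inv, div_eq_mul_inv]
      calc (len I)⁻¹ * Sig = (K⁻¹ * K) * ((len I)⁻¹ * Sig) := by
            rw [ENNReal.inv_mul_cancel hK0 hKtop, one_mul]
        _ = K * (len I)⁻¹ * Sig * K⁻¹ := by ring
    rw [e]
    exact ENNReal.div_le_div_right hfinal K
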